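/- Let G_T be a G-system at t₀, G_t ∈ G_T, and let J = J₁ ⊔ J₂ be a disjoint union of subsets of G_{t₀}. Then T_{J₂}(T_{J₁}(G_t)) = T_J(G_t) = T_{J₁}(T_{J₂}(G_t)); that is, co-Bongartz completions along disjoint subsets of the initial basis commute and compose to the co-Bongartz completion along their union. -/

import Mathlib

/-- A `G`-system at `t₀` (Definition 5.1.1): a collection of ℤ-bases of ℤⁿ, indexed by `T`,
satisfying the Mutation Condition, the Co-Bongartz Completion Condition and the
Uniqueness Condition. -/
structure GSystem (n : ℕ) (T : Type) (t₀ : T) where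
  g : T → Fin n → (Fin n → ℤ)
  indep : ∀ t, LinearIndependent ℤ (g t)
  span : ∀ t, Submodule.span ℤ (Set.range (g t)) = ⊤
  mutation : ∀ (t : T) (k : Fin n), ∃ t₁ : T,
    Set.range (g t) ∩ Set.range (g t₁) = Set.range (g t) \ {g t k}
  coBongartz : ∀ (t : T) (J : Set (Fin n → ℤ)), J ⊆ Set.range (g t₀) →
    ∃ t' : T, J ⊆ Set.range (g t') ∧
      ∀ (k : Fin n) (r : Fin n → ℤ), g t k = ∑ i, r i • g t' i →
        ∀ i, g t' i ∉ J → 0 ≤ r i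
  uniqueness : ∀ (u v : T) (I I' : Finset (Fin n)) (r r' : Fin n → ℤ),
    (∀ i ∈ I, 0 < r i) → (∀ j ∈ I', 0 < r' j) →
    (∑ i ∈ I, r i • g u i) = (∑ j ∈ I', r' j • g v j) →
    ∃ σ : Fin n → Fin n, Set.BijOn σ ↑I' ↑I ∧
      ∀ j ∈ I', r' j = r (σ j) ∧ g v j = g u (σ j)

/-- `G_{t'}` is a co-Bongartz completion of `J` with respect to `G_t`
(conditions (a) and (b) of Proposition-Definition 5.1.4). -/
def GSystem.IsCoB {n : ℕ} {T : Type} {t₀ : T} (S : GSystem n T t₀)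
    (J : Set (Fin n → ℤ)) (t t' : T) : Prop :=
  J ⊆ Set.range (S.g t') ∧
  ∀ (k : Fin n) (r : Fin n → ℤ), S.g t k = ∑ i, r i • S.g t' i →
    ∀ i, S.g t' i ∉ J → 0 ≤ r i

/-- `G_{t'}` is the mutation of `G_t` at `g_{k;t}`, i.e.
`G_t ∩ G_{t'} = G_t \ {g_{k;t}}` (Proposition-Definition 5.1.3). -/
def GSystem.IsMutationAt {n : ℕ} {T : Type} {t₀ : T} (S : GSystem n T t₀)
    (t t' : T) (k : Fin n) : Prop :=
  Set.range (S.g t) ∩ Set.range (S.g t') = Set.range (S.g t) \ {S.g t k}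

/-!
Write `x = g_{k;t}`. Adding large multiples of `∑ J₁` and then of `∑ J₂` to `x` produces a
vector `z` with nonnegative coordinates both in `G_v = T_{J₂}(T_{J₁}(G_t))` (the first shift
clears the negative `J₁`-coordinates in `G_u = T_{J₁}(G_t)`, which `G_v` then keeps nonnegative
outside `J₂`, and the second shift clears the rest) and in `G_w = T_{J₁ ∪ J₂}(G_t)`, where
moreover every coordinate along `J₁ ∪ J₂` is positive. The Uniqueness Condition then puts the
`G_w`-support of `z` inside `G_v ∩ G_w`; hence `x` lies in the span of `G_v ∩ G_w`. So this
intersection spans `ℤⁿ`, and a spanning subset of a basis is the whole basis.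
-/

lemma LinearIndependent.subset_range_eq {ι R M : Type*} [Semiring R] [Nontrivial R]
    [AddCommMonoid M] [Module R M] {f : ι → M} (hf : LinearIndependent R f) {s : Set M}
    (hsub : s ⊆ Set.range f) (hspan : Submodule.span R s = ⊤) : s = Set.range f := by
  refine hsub.antisymm (Set.range_subset_iff.2 fun i => ?_)
  by_contra hi
  have := hf.notMem_span_image (s := f ⁻¹' s) hi
  rw [Set.image_preimage_eq_of_subset hsub, hspan] at this
  exact this Submodule.mem_top

lemma Int.eventually_neg_lt {ι : Type*} [Finite ι] (f : ι → ℤ) :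
    ∀ᶠ M : ℕ in Filter.atTop, ∀ i, -(M : ℤ) < f i :=
  Filter.eventually_all.2 fun i =>
    (Filter.eventually_gt_atTop (-f i).toNat).mono fun M hM => by omega

namespace GSystem

variable {n : ℕ} {T : Type} {t₀ : T} (S : GSystem n T t₀)

noncomputable def basis (t : T) : Module.Basis (Fin n) ℤ (Fin n → ℤ) :=
  Module.Basis.mk (S.indep t) (S.span t).ge

lemma basis_apply (t : T) (i : Fin n) : S.basis t i = S.g t i :=
  Module.Basis.mk_apply _ _ _

lemma sum_repr (t : T) (x : Fin n → ℤ) : ∑ i, (S.basis t).repr x i • S.g t i = x := by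
  simpa only [S.basis_apply] using (S.basis t).sum_repr x

lemma sum_support_repr (t : T) (x : Fin n → ℤ) :
    ∑ i ∈ ((S.basis t).repr x).support, (S.basis t).repr x i • S.g t i = x := by
  simpa [Finsupp.linearCombination_apply, Finsupp.sum, S.basis_apply] using
    (S.basis t).linearCombination_repr x

lemma repr_g_apply (t : T) (i j : Fin n) :
    (S.basis t).repr (S.g t i) j = if i = j then 1 else 0 := by
  rw [← S.basis_apply, Module.Basis.repr_self_apply]

lemma repr_add_smul_sum_apply {τ : T} {F : Finset (Fin n → ℤ)}
    (hF : ↑F ⊆ Set.range (S.g τ)) (x : Fin n → ℤ) (m : ℤ) (p : Fin n) :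
    (S.basis τ).repr (x + m • ∑ y ∈ F, y) p
      = (S.basis τ).repr x p + if S.g τ p ∈ F then m else 0 := by
  have hsum : ∑ y ∈ F, (S.basis τ).repr y p = ∑ y ∈ F, if y = S.g τ p then 1 else 0 :=
    Finset.sum_congr rfl fun y hy => by
      obtain ⟨i, rfl⟩ := hF hy
      simp only [S.repr_g_apply, (S.indep τ).injective.eq_iff]
  simp only [map_add, map_smul, map_sum, Finsupp.add_apply, Finsupp.smul_apply,
    Finsupp.finsetSum_apply, hsum, Finset.sum_ite_eq', smul_eq_mul, mul_ite, mul_one, mul_zero]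

lemma repr_g_nonneg_of_isCoB {J : Set (Fin n → ℤ)} {t t' : T} (h : S.IsCoB J t t')
    (k : Fin n) {i : Fin n} (hi : S.g t' i ∉ J) : 0 ≤ (S.basis t').repr (S.g t k) i :=
  h.2 k _ (S.sum_repr t' (S.g t k)).symm i hi

lemma repr_nonneg_of_isCoB {J : Set (Fin n → ℤ)} {u v : T} (h : S.IsCoB J u v)
    {x : Fin n → ℤ} (hx : ∀ i, 0 ≤ (S.basis u).repr x i) {p : Fin n} (hp : S.g v p ∉ J) :
    0 ≤ (S.basis v).repr x p := by
  rw [← S.sum_repr u x, map_sum, Finsupp.finsetSum_apply]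
  refine Finset.sum_nonneg fun i _ => ?_
  rw [map_smul, Finsupp.smul_apply, smul_eq_mul]
  exact mul_nonneg (hx i) (S.repr_g_nonneg_of_isCoB h i hp)

lemma g_mem_range_of_repr_pos {v w : T} {z : Fin n → ℤ}
    (hv : ∀ p, 0 ≤ (S.basis v).repr z p) (hw : ∀ p, 0 ≤ (S.basis w).repr z p)
    {p : Fin n} (hp : 0 < (S.basis w).repr z p) : S.g w p ∈ Set.range (S.g v) := by
  have hpos : ∀ u, (∀ p, 0 ≤ (S.basis u).repr z p) →
      ∀ i ∈ ((S.basis u).repr z).support, 0 < (S.basis u).repr z i :=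
    fun u hu i hi => (hu i).lt_of_ne' (Finsupp.mem_support_iff.1 hi)
  obtain ⟨σ, -, hσ⟩ := S.uniqueness v w _ _ _ _ (hpos v hv) (hpos w hw)
    ((S.sum_support_repr v z).trans (S.sum_support_repr w z).symm)
  exact ⟨σ p, (hσ p (Finsupp.mem_support_iff.2 hp.ne')).2.symm⟩

lemma mem_span_inter_of_repr_nonneg {v w : T} {z : Fin n → ℤ}
    (hv : ∀ p, 0 ≤ (S.basis v).repr z p) (hw : ∀ p, 0 ≤ (S.basis w).repr z p) :
    z ∈ Submodule.span ℤ (Set.range (S.g v) ∩ Set.range (S.g w)) := by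
  rw [← S.sum_support_repr w z]
  exact Submodule.sum_mem _ fun p hp => Submodule.smul_mem _ _ <| Submodule.subset_span
    ⟨S.g_mem_range_of_repr_pos hv hw ((hw p).lt_of_ne' (Finsupp.mem_support_iff.1 hp)), p, rfl⟩

lemma range_eq_of_forall_g_mem_span_inter {t v w : T}
    (h : ∀ k, S.g t k ∈ Submodule.span ℤ (Set.range (S.g v) ∩ Set.range (S.g w))) :
    Set.range (S.g v) = Set.range (S.g w) := by
  have htop : Submodule.span ℤ (Set.range (S.g v) ∩ Set.range (S.g w)) = ⊤ :=
    eq_top_iff.2 <| (S.span t).ge.trans <| Submodule.span_le.2 <| Set.range_subset_iff.2 h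
  rw [← (S.indep v).subset_range_eq Set.inter_subset_left htop,
    (S.indep w).subset_range_eq Set.inter_subset_right htop]

lemma exists_repr_nonneg_of_isCoB {t u v w : T} {F₁ F₂ : Finset (Fin n → ℤ)}
    (hu : S.IsCoB ↑F₁ t u) (hv : S.IsCoB ↑F₂ u v) (hw : S.IsCoB (↑F₁ ∪ ↑F₂) t w) (k : Fin n) :
    ∃ z, z - S.g t k ∈ Submodule.span ℤ (↑F₁ ∪ ↑F₂) ∧ (∀ p, 0 ≤ (S.basis v).repr z p) ∧
      (∀ p, 0 ≤ (S.basis w).repr z p) ∧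
      ∀ p, S.g w p ∈ F₁ ∪ F₂ → 0 < (S.basis w).repr z p := by
  set x := S.g t k
  obtain ⟨M₁, hM₁u, hM₁w⟩ := ((Int.eventually_neg_lt ((S.basis u).repr x)).and
    (Int.eventually_neg_lt ((S.basis w).repr x))).exists
  set y := x + (M₁ : ℤ) • ∑ a ∈ F₁, a
  have hyu : ∀ i, 0 ≤ (S.basis u).repr y i := fun i => by
    rw [S.repr_add_smul_sum_apply hu.1]
    split_ifs with hi
    · linarith [hM₁u i]
    · simpa using S.repr_g_nonneg_of_isCoB hu k (i := i) hi
  obtain ⟨M₂, hM₂v, hM₂w⟩ := ((Int.eventually_neg_lt ((S.basis v).repr y)).and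
    (Int.eventually_neg_lt ((S.basis w).repr x))).exists
  have hsum : ∀ F : Finset (Fin n → ℤ), ↑F ⊆ (↑F₁ ∪ ↑F₂ : Set (Fin n → ℤ)) →
      ∑ a ∈ F, a ∈ Submodule.span ℤ (↑F₁ ∪ ↑F₂) :=
    fun F hF => Submodule.sum_mem _ fun a ha => Submodule.subset_span (hF ha)
  refine ⟨y + (M₂ : ℤ) • ∑ a ∈ F₂, a, ?_, fun p => ?_, fun p => ?_, fun p hp => ?_⟩
  · rw [add_sub_right_comm, add_sub_cancel_left]
    exact add_mem (Submodule.smul_mem _ _ (hsum F₁ Set.subset_union_left))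
      (Submodule.smul_mem _ _ (hsum F₂ Set.subset_union_right))
  · rw [S.repr_add_smul_sum_apply hv.1]
    split_ifs with hp
    · linarith [hM₂v p]
    · simpa using S.repr_nonneg_of_isCoB hv hyu hp
  all_goals
    have hx : S.g w p ∉ F₁ → S.g w p ∉ F₂ → 0 ≤ (S.basis w).repr x p := fun h₁ h₂ =>
      S.repr_g_nonneg_of_isCoB hw k (by simp [h₁, h₂])
    have := hM₁w p
    have := hM₂w p
    rw [S.repr_add_smul_sum_apply (Set.subset_union_right.trans hw.1),
      S.repr_add_smul_sum_apply (Set.subset_union_left.trans hw.1)]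
    split_ifs with h₁ h₂ h₂ <;> first | omega | simp_all

lemma g_mem_span_inter_of_isCoB {t u v w : T} {F₁ F₂ : Finset (Fin n → ℤ)}
    (hu : S.IsCoB ↑F₁ t u) (hv : S.IsCoB ↑F₂ u v) (hw : S.IsCoB (↑F₁ ∪ ↑F₂) t w) (k : Fin n) :
    S.g t k ∈ Submodule.span ℤ (Set.range (S.g v) ∩ Set.range (S.g w)) := by
  obtain ⟨z, hzx, hzv, hzw, hpos⟩ := S.exists_repr_nonneg_of_isCoB hu hv hw k
  have hF : ↑F₁ ∪ ↑F₂ ⊆ Set.range (S.g v) ∩ Set.range (S.g w) := fun a ha => by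
    obtain ⟨p, rfl⟩ := hw.1 ha
    exact ⟨S.g_mem_range_of_repr_pos hzv hzw (hpos p (by simpa using ha)), p, rfl⟩
  rw [← sub_sub_cancel z (S.g t k)]
  exact sub_mem (S.mem_span_inter_of_repr_nonneg hzv hzw) (Submodule.span_mono hF hzx)

theorem range_eq_of_isCoB_of_isCoB_union {t u v w : T} {J₁ J₂ : Set (Fin n → ℤ)}
    (hu : S.IsCoB J₁ t u) (hv : S.IsCoB J₂ u v) (hw : S.IsCoB (J₁ ∪ J₂) t w) :
    Set.range (S.g v) = Set.range (S.g w) := by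
  obtain ⟨F₁, rfl⟩ := ((Set.finite_range (S.g u)).subset hu.1).exists_finset_coe
  obtain ⟨F₂, rfl⟩ := ((Set.finite_range (S.g v)).subset hv.1).exists_finset_coe
  exact S.range_eq_of_forall_g_mem_span_inter (S.g_mem_span_inter_of_isCoB hu hv hw)

end GSystem

theorem stmt5_general {n : ℕ} {T : Type} {t₀ : T} (S : GSystem n T t₀) (t : T)
    (J₁ J₂ : Set (Fin n → ℤ))
    (t₁ t₂ t₃ t₄ t' : T)
    (ht₁ : S.IsCoB J₁ t t₁) (ht₂ : S.IsCoB J₂ t₁ t₂)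
    (ht₃ : S.IsCoB J₂ t t₃) (ht₄ : S.IsCoB J₁ t₃ t₄)
    (ht' : S.IsCoB (J₁ ∪ J₂) t t') :
    Set.range (S.g t₂) = Set.range (S.g t') ∧
    Set.range (S.g t₄) = Set.range (S.g t') :=
  ⟨S.range_eq_of_isCoB_of_isCoB_union ht₁ ht₂ ht',
    S.range_eq_of_isCoB_of_isCoB_union ht₃ ht₄ (Set.union_comm J₁ J₂ ▸ ht')⟩

/-- Theorem 5.1.9: for a disjoint union `J = J₁ ⊔ J₂` of subsets of the initial
basis `G_{t₀}`, co-Bongartz completions compose: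
`T_{J₂}(T_{J₁}(G_t)) = T_J(G_t) = T_{J₁}(T_{J₂}(G_t))`. -/
theorem stmt5 {n : ℕ} {T : Type} {t₀ : T} (S : GSystem n T t₀) (t : T)
    (J₁ J₂ : Set (Fin n → ℤ))
    (h₁ : J₁ ⊆ Set.range (S.g t₀)) (h₂ : J₂ ⊆ Set.range (S.g t₀))
    (hdisj : Disjoint J₁ J₂)
    (t₁ t₂ t₃ t₄ t' : T)
    (ht₁ : S.IsCoB J₁ t t₁) (ht₂ : S.IsCoB J₂ t₁ t₂)
    (ht₃ : S.IsCoB J₂ t t₃) (ht₄ : S.IsCoB J₁ t₃ t₄)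
    (ht' : S.IsCoB (J₁ ∪ J₂) t t') :
    Set.range (S.g t₂) = Set.range (S.g t') ∧
    Set.range (S.g t₄) = Set.range (S.g t') :=
  stmt5_general S t J₁ J₂ t₁ t₂ t₃ t₄ t' ht₁ ht₂ ht₃ ht₄ ht'
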